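/- arXiv:2501.15093 — 2 statements merged into one kernel-verified Lean document; each statement's English description precedes it below -/
import Mathlib

section
/- Define f₃(b) = 4π ∫₀^π [sin³θ (cosθ + b)] / (1 + cos²θ + 2b cosθ) dθ for b ∈ (-1,1). Then f₃ is differentiable with f₃'(b) = 4π ∫₀^π sin⁵θ / (1 + cos²θ + 2b cosθ)² dθ, and in particular f₃'(b) > 0 for all b ∈ (-1,1). -/
open Real

noncomputable def f₃ (b : ℝ) : ℝ :=
  4 * Real.pi * ∫ θ in (0:ℝ)..Real.pi,
    (Real.sin θ)^3 * (Real.cos θ + b) / (1 + (Real.cos θ)^2 + 2*b*Real.cos θ)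

/-!
Differentiate under the integral sign. The denominator `D = 1 + cos²θ + 2b cos θ` equals
`(cos θ + b)² + 1 - b²`, so it is at least `1 - r²` for `|b| ≤ r < 1`; this bounds the
`b`-derivative of the integrand uniformly near any `b ∈ (-1, 1)`. That derivative is
`sin³θ (1 - cos²θ) / D² = sin⁵θ / D²`, positive on `(0, π)`.
-/

open Set Filter Topology intervalIntegral

lemma one_sub_sq_le_one_add_sq_add_two_mul_mul (b t : ℝ) : 1 - b ^ 2 ≤ 1 + t ^ 2 + 2 * b * t := by
  nlinarith [sq_nonneg (t + b)]

lemma one_add_sq_add_two_mul_mul_pos {b : ℝ} (hb : b ^ 2 < 1) (t : ℝ) :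
    0 < 1 + t ^ 2 + 2 * b * t := by
  linarith [one_sub_sq_le_one_add_sq_add_two_mul_mul b t]

lemma continuous_sin_pow_three_mul_div {b : ℝ} (hb : b ^ 2 < 1) :
    Continuous fun θ => sin θ ^ 3 * (cos θ + b) / (1 + cos θ ^ 2 + 2 * b * cos θ) := by
  fun_prop (disch := exact fun θ => (one_add_sq_add_two_mul_mul_pos hb (cos θ)).ne')

lemma continuous_sin_pow_five_div_sq {b : ℝ} (hb : b ^ 2 < 1) :
    Continuous fun θ => sin θ ^ 5 / (1 + cos θ ^ 2 + 2 * b * cos θ) ^ 2 :=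
  by fun_prop (disch := exact fun θ => (pow_pos (one_add_sq_add_two_mul_mul_pos hb (cos θ)) 2).ne')

lemma hasDerivAt_sin_pow_three_mul_div (θ : ℝ) {x : ℝ} (hx : 1 + cos θ ^ 2 + 2 * x * cos θ ≠ 0) :
    HasDerivAt (fun y => sin θ ^ 3 * (cos θ + y) / (1 + cos θ ^ 2 + 2 * y * cos θ))
      (sin θ ^ 5 / (1 + cos θ ^ 2 + 2 * x * cos θ) ^ 2) x := by
  have hnum : HasDerivAt (fun y => sin θ ^ 3 * (cos θ + y)) (sin θ ^ 3) x := by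
    simpa using ((hasDerivAt_id x).const_add (cos θ)).const_mul (sin θ ^ 3)
  have hden : HasDerivAt (fun y => 1 + cos θ ^ 2 + 2 * y * cos θ) (2 * cos θ) x := by
    simpa using (((hasDerivAt_id x).const_mul 2).mul_const (cos θ)).const_add (1 + cos θ ^ 2)
  refine (hnum.div hden hx).congr_deriv (congrArg (· / _) ?_)
  linear_combination -sin θ ^ 3 * Real.sin_sq θ

lemma norm_sin_pow_five_div_sq_le {r x : ℝ} (hxr : x ^ 2 ≤ r ^ 2) (hr : r ^ 2 < 1) (θ : ℝ) :
    ‖sin θ ^ 5 / (1 + cos θ ^ 2 + 2 * x * cos θ) ^ 2‖ ≤ 1 / (1 - r ^ 2) ^ 2 := by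
  have hlow : 1 - r ^ 2 ≤ 1 + cos θ ^ 2 + 2 * x * cos θ := by
    linarith [one_sub_sq_le_one_add_sq_add_two_mul_mul x (cos θ)]
  rw [norm_div, norm_pow, norm_pow, Real.norm_eq_abs, Real.norm_eq_abs,
    abs_of_pos (by linarith : 0 < 1 + cos θ ^ 2 + 2 * x * cos θ)]
  exact div_le_div₀ zero_le_one (pow_le_one₀ (abs_nonneg _) (abs_sin_le_one θ))
    (by nlinarith) (pow_le_pow_left₀ (by linarith) hlow 2)

lemma hasDerivAt_integral_sin_pow_three_mul_div {b : ℝ} (hb : |b| < 1) :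
    HasDerivAt
      (fun x => ∫ θ in (0:ℝ)..π, sin θ ^ 3 * (cos θ + x) / (1 + cos θ ^ 2 + 2 * x * cos θ))
      (∫ θ in (0:ℝ)..π, sin θ ^ 5 / (1 + cos θ ^ 2 + 2 * b * cos θ) ^ 2) b := by
  obtain ⟨r, hbr, hr⟩ := exists_between hb
  have hr2 : r ^ 2 < 1 := pow_lt_one₀ ((abs_nonneg b).trans hbr.le) hr two_ne_zero
  have hnhds : Ioo (-r) r ∈ 𝓝 b := Ioo_mem_nhds (abs_lt.1 hbr).1 (abs_lt.1 hbr).2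
  have hsq : ∀ x ∈ Ioo (-r) r, x ^ 2 < r ^ 2 := fun x hx => sq_lt_sq' hx.1 hx.2
  have hb2 : b ^ 2 < 1 := (sq_lt_one_iff_abs_lt_one b).2 hb
  refine (hasDerivAt_integral_of_dominated_loc_of_deriv_le
    (F' := fun x θ => sin θ ^ 5 / (1 + cos θ ^ 2 + 2 * x * cos θ) ^ 2)
    (bound := fun _ => 1 / (1 - r ^ 2) ^ 2)
    hnhds ?_ ((continuous_sin_pow_three_mul_div hb2).intervalIntegrable _ _)
    (continuous_sin_pow_five_div_sq hb2).aestronglyMeasurable ?_ intervalIntegrable_const ?_).2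
  · filter_upwards [hnhds] with x hx
    exact (continuous_sin_pow_three_mul_div ((hsq x hx).trans hr2)).aestronglyMeasurable
  · exact .of_forall fun θ _ x hx => norm_sin_pow_five_div_sq_le (hsq x hx).le hr2 θ
  · exact .of_forall fun θ _ x hx => hasDerivAt_sin_pow_three_mul_div θ
      (one_add_sq_add_two_mul_mul_pos ((hsq x hx).trans hr2) (cos θ)).ne'

lemma integral_sin_pow_five_div_sq_pos {b : ℝ} (hb : b ^ 2 < 1) :
    0 < ∫ θ in (0:ℝ)..π, sin θ ^ 5 / (1 + cos θ ^ 2 + 2 * b * cos θ) ^ 2 := by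
  refine intervalIntegral_pos_of_pos_on ((continuous_sin_pow_five_div_sq hb).intervalIntegrable _ _)
    (fun θ hθ => ?_) pi_pos
  have := sin_pos_of_pos_of_lt_pi hθ.1 hθ.2
  have := one_add_sq_add_two_mul_mul_pos hb (cos θ)
  positivity

theorem f₃_deriv : ∀ b ∈ Set.Ioo (-1:ℝ) 1,
    HasDerivAt f₃
      (4 * Real.pi * ∫ θ in (0:ℝ)..Real.pi,
        (Real.sin θ)^5 / (1 + (Real.cos θ)^2 + 2*b*Real.cos θ)^2) b ∧
    0 < 4 * Real.pi * ∫ θ in (0:ℝ)..Real.pi,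
        (Real.sin θ)^5 / (1 + (Real.cos θ)^2 + 2*b*Real.cos θ)^2 := by
  intro b hb
  have hb : |b| < 1 := abs_lt.2 hb
  exact ⟨(hasDerivAt_integral_sin_pow_three_mul_div hb).const_mul (4 * π),
    mul_pos (by positivity)
      (integral_sin_pow_five_div_sq_pos ((sq_lt_one_iff_abs_lt_one b).2 hb))⟩
end

section
/- Let μ₂ > 0 and let γ̄ > 0, and let β̄ ∈ (0, γ̄] satisfy β̄² + β̄ < μ₂. Suppose y : [1,∞) → ℝ is a continuous nonnegative bounded function, differentiable twice wherever y > 0, satisfying the differential inequality -y''(t) + y'(t) + μ₂ y(t) ≤ K e^{-γ̄ t} at every t ≥ 1 with y(t) > 0, for some constant K ≥ 0. Then there exists a constant B (depending on K, y(1), μ₂, β̄) such that y(t) ≤ B e^{-β̄(t-1)} for all t ≥ 1. -/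
/-!
Compare `y` with the supersolution `z t = B e^{-β (t - 1)}`: since `z' = -β z` and `z'' = β² z`,
`-z'' + z' + μ₂ z = (μ₂ - β² - β) z`, which dominates `K e^{-γ t}` once `(μ₂ - β² - β) B ≥ K`,
and `B ≥ y 1` gives `y ≤ z` at the left end. By a maximum principle, `y - z - ε (t - a)` cannot
have a positive interior maximum (there `y > 0`, the first derivative vanishes and the second is
nonpositive, contradicting the two differential inequalities), while boundedness of `y` sends it to
`-∞`; so it is nonpositive, and `ε → 0` gives `y ≤ z`.
-/

open Filter Set Topology Real

theorem IsLocalMax.nonpos_of_hasDerivAt_of_hasDerivAt {f f' : ℝ → ℝ} {x f'' : ℝ}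
    (hmax : IsLocalMax f x) (hf : ∀ᶠ s in 𝓝 x, HasDerivAt f (f' s) s)
    (hf' : HasDerivAt f' f'' x) : f'' ≤ 0 := by
  by_contra! hpos
  have hcrit : f' x = 0 := hmax.hasDerivAt_eq_zero hf.self_of_nhds
  have hslope : ∀ᶠ s in 𝓝[≠] x, 0 < slope f' x s :=
    (hasDerivAt_iff_tendsto_slope.mp hf').eventually (eventually_gt_nhds hpos)
  obtain ⟨l, u, ⟨hlx, hxu⟩, hsub⟩ :=
    ((eventually_nhdsWithin_iff.mp hslope).and (hf.and hmax)).exists_Ioo_subset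
  have hIcc : Icc x ((x + u) / 2) ⊆ Ioo l u := Icc_subset_Ioo hlx (by linarith)
  obtain ⟨c, hc, hc_eq⟩ := exists_hasDerivAt_eq_slope f f' (by linarith : x < (x + u) / 2)
    (fun s hs ↦ (hsub (hIcc hs)).2.1.continuousAt.continuousWithinAt)
    (fun s hs ↦ (hsub (hIcc (Ioo_subset_Icc_self hs))).2.1)
  have hc_pos : 0 < f' c :=
    pos_of_slope_pos hc.1 ((hsub (hIcc (Ioo_subset_Icc_self hc))).1 hc.1.ne') hcrit
  have hle : f ((x + u) / 2) ≤ f x := (hsub (hIcc (right_mem_Icc.2 (by linarith)))).2.2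
  rw [hc_eq] at hc_pos
  have : 0 < f ((x + u) / 2) - f x := (div_pos_iff_of_pos_right (by linarith)).1 hc_pos
  linarith

theorem nonpos_of_forall_not_isLocalMax {φ : ℝ → ℝ} {a : ℝ} (hφ : ContinuousOn φ (Ici a))
    (ha : φ a ≤ 0) (hatTop : ∀ᶠ t in atTop, φ t ≤ 0)
    (hmax : ∀ t, a < t → 0 < φ t → ¬IsLocalMax φ t) : ∀ t, a ≤ t → φ t ≤ 0 := by
  by_contra! ⟨t₀, ht₀, hφt₀⟩
  obtain ⟨T, hT⟩ := eventually_atTop.mp hatTop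
  have hmem : t₀ ∈ Icc a (max t₀ T) := ⟨ht₀, le_max_left _ _⟩
  obtain ⟨t, ⟨hat, htT⟩, htmax⟩ :=
    isCompact_Icc.exists_isMaxOn ⟨t₀, hmem⟩ (hφ.mono Icc_subset_Ici_self)
  have hφt : 0 < φ t := hφt₀.trans_le (htmax hmem)
  have hIci : IsMaxOn φ (Ici a) t := fun s hs ↦ by
    rcases le_or_gt s (max t₀ T) with hs' | hs'
    · exact htmax ⟨hs, hs'⟩
    · exact (hT s ((le_max_right _ _).trans hs'.le)).trans hφt.le
  have hat' : a < t := hat.lt_of_ne (by rintro rfl; linarith)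
  exact hmax t hat' hφt (hIci.isLocalMax (Ici_mem_nhds hat'))

section Comparison

variable {μ a M : ℝ} {y y' y'' z z' z'' : ℝ → ℝ}
  (hμ : 0 ≤ μ) (hy : ContinuousOn y (Ici a)) (hM : ∀ t, a ≤ t → y t ≤ M)
  (hz : ∀ t, HasDerivAt z (z' t) t) (hz' : ∀ t, HasDerivAt z' (z'' t) t) (hz0 : ∀ t, 0 ≤ z t)
  (ha : y a ≤ z a)
  (hdiff : ∀ t, a < t → 0 < y t →
    HasDerivAt y (y' t) t ∧ HasDerivAt y' (y'' t) t ∧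
      -(y'' t) + y' t + μ * y t ≤ -(z'' t) + z' t + μ * z t)
include hμ hy hM hz hz' hz0 ha hdiff

theorem le_add_mul_sub_of_comparison {ε : ℝ} (hε : 0 < ε) :
    ∀ t, a ≤ t → y t ≤ z t + ε * (t - a) := by
  set φ : ℝ → ℝ := fun t ↦ y t - z t - ε * (t - a)
  suffices ∀ t, a ≤ t → φ t ≤ 0 from fun t ht ↦ by linarith [this t ht]
  have hzc : Continuous z := continuous_iff_continuousAt.2 fun t ↦ (hz t).continuousAt
  refine nonpos_of_forall_not_isLocalMax ((hy.sub hzc.continuousOn).sub (by fun_prop))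
    (by simp [φ, ha]) ?_ fun t ht hφt hmax ↦ ?_
  · filter_upwards [eventually_ge_atTop a, eventually_ge_atTop (a + M / ε)] with t hat ht
    have : M ≤ ε * (t - a) := (div_le_iff₀' hε).1 (by linarith)
    linarith [hM t hat, hz0 t]
  have hyz : z t < y t := by nlinarith
  have hy0 : 0 < y t := (hz0 t).trans_lt hyz
  have hnear : ∀ᶠ s in 𝓝 t, a < s ∧ 0 < y s :=
    (eventually_gt_nhds ht).and ((hy.continuousAt (Ici_mem_nhds ht)).eventually (lt_mem_nhds hy0))
  have hφ' : ∀ᶠ s in 𝓝 t, HasDerivAt φ (y' s - z' s - ε) s :=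
    hnear.mono fun s ⟨hs, hys⟩ ↦ (((hdiff s hs hys).1.sub (hz s)).sub
      (((hasDerivAt_id s).sub_const a).const_mul ε)).congr_deriv (by rw [mul_one])
  obtain ⟨-, hy'', hode⟩ := hdiff t ht hy0
  have hcrit := hmax.hasDerivAt_eq_zero hφ'.self_of_nhds
  have hconc := hmax.nonpos_of_hasDerivAt_of_hasDerivAt hφ' ((hy''.sub (hz' t)).sub_const ε)
  nlinarith [mul_le_mul_of_nonneg_left hyz.le hμ]

theorem le_of_comparison : ∀ t, a ≤ t → y t ≤ z t := fun t ht ↦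
  have hlim : Tendsto (fun ε ↦ z t + ε * (t - a)) (𝓝[>] 0) (𝓝 (z t)) :=
    (Continuous.tendsto' (by fun_prop) 0 _ (by simp)).mono_left nhdsWithin_le_nhds
  ge_of_tendsto hlim (eventually_nhdsWithin_of_forall fun ε hε ↦
    le_add_mul_sub_of_comparison hμ hy hM hz hz' hz0 ha hdiff hε t ht)

end Comparison

theorem hasDerivAt_mul_exp_mul_sub (B c a t : ℝ) :
    HasDerivAt (fun s ↦ B * exp (c * (s - a))) (c * (B * exp (c * (t - a)))) t :=
  ((((hasDerivAt_id t).sub_const a).const_mul c).exp.const_mul B).congr_deriv (by simp; ring)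

theorem ode_comparison_general (μ₂ γ K β : ℝ) (hμ : 0 < μ₂)
    (hβ0 : 0 < β) (hβγ : β ≤ γ) (hβμ : β^2 + β < μ₂) (hK : 0 ≤ K)
    (y y' y'' : ℝ → ℝ)
    (hcont : ContinuousOn y (Set.Ici (1:ℝ)))
    (hbdd : ∃ M, ∀ t, 1 ≤ t → y t ≤ M)
    (hdiff : ∀ t, 1 ≤ t → 0 < y t →
      HasDerivAt y (y' t) t ∧ HasDerivAt y' (y'' t) t ∧
        -(y'' t) + y' t + μ₂ * y t ≤ K * Real.exp (-γ * t)) :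
    ∃ B : ℝ, ∀ t, 1 ≤ t → y t ≤ B * Real.exp (-β * (t - 1)) := by
  obtain ⟨M, hM⟩ := hbdd
  have hc : 0 < μ₂ - β ^ 2 - β := by linarith
  set B := max (y 1) (K / (μ₂ - β ^ 2 - β))
  have hB0 : 0 ≤ B := le_max_of_le_right (div_nonneg hK hc.le)
  have hKB : K ≤ (μ₂ - β ^ 2 - β) * B := (div_le_iff₀' hc).1 (le_max_right _ _)
  set z : ℝ → ℝ := fun t ↦ B * exp (-β * (t - 1))
  have hz (t : ℝ) : HasDerivAt z (-β * z t) t := hasDerivAt_mul_exp_mul_sub B (-β) 1 t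
  refine ⟨B, le_of_comparison (y' := y') (y'' := y'') (z'' := fun t ↦ -β * (-β * z t)) hμ.le
    hcont hM hz (fun t ↦ (hz t).const_mul (-β)) (fun t ↦ by positivity) (by simp [B])
    fun t ht hyt ↦ ?_⟩
  obtain ⟨hy', hy'', hode⟩ := hdiff t ht.le hyt
  refine ⟨hy', hy'', hode.trans ?_⟩
  calc K * exp (-γ * t) ≤ K * exp (-β * (t - 1)) :=
      mul_le_mul_of_nonneg_left (exp_le_exp.2 (by nlinarith)) hK
    _ ≤ (μ₂ - β ^ 2 - β) * B * exp (-β * (t - 1)) := by gcongr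
    _ = -(-β * (-β * z t)) + -β * z t + μ₂ * z t := by ring

theorem ode_comparison (μ₂ γ K β : ℝ) (hμ : 0 < μ₂) (hγ : 0 < γ)
    (hβ0 : 0 < β) (hβγ : β ≤ γ) (hβμ : β^2 + β < μ₂) (hK : 0 ≤ K)
    (y y' y'' : ℝ → ℝ)
    (hcont : ContinuousOn y (Set.Ici (1:ℝ)))
    (hnonneg : ∀ t, 1 ≤ t → 0 ≤ y t)
    (hbdd : ∃ M, ∀ t, 1 ≤ t → y t ≤ M)
    (hdiff : ∀ t, 1 ≤ t → 0 < y t →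
      HasDerivAt y (y' t) t ∧ HasDerivAt y' (y'' t) t ∧
        -(y'' t) + y' t + μ₂ * y t ≤ K * Real.exp (-γ * t)) :
    ∃ B : ℝ, ∀ t, 1 ≤ t → y t ≤ B * Real.exp (-β * (t - 1)) :=
  ode_comparison_general μ₂ γ K β hμ hβ0 hβγ hβμ hK y y' y'' hcont hbdd hdiff
end
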